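/- Let $Z$ be an ordered $z$-tree with $k$ edges. Then for all $n\ge k+1$, ${\rm ex}_\rightarrow(n,Z) = (k-1)n - \binom{k}{2}$. -/

import Mathlib

/-- Vertex set of an ordered-graph pattern given by its edge set. -/
def verts (E : Finset (ℕ × ℕ)) : Finset ℕ := E.image Prod.fst ∪ E.image Prod.snd

/-- An increasing (ordered) tree with its current longest edge (i,j). -/
inductive IncTree : Finset (ℕ × ℕ) → ℕ → ℕ → Prop
  | single (i j : ℕ) : i < j → IncTree {(i, j)} i j
  | right (E : Finset (ℕ × ℕ)) (i j j' : ℕ) :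
      IncTree E i j → j < j' → IncTree (insert (i, j') E) i j'
  | left (E : Finset (ℕ × ℕ)) (i j i' : ℕ) :
      IncTree E i j → i' < i → IncTree (insert (i', j) E) i' j

/-- A z-tree: union of an increasing tree T with longest edge (i,j), a set S_j of edges
(h,j) with h < i, and a set S_i of edges (i,k) with k > j. -/
def ZTree (E : Finset (ℕ × ℕ)) : Prop :=
  ∃ (T Sj Si : Finset (ℕ × ℕ)) (i j : ℕ), IncTree T i j ∧
    (∀ p ∈ Sj, p.2 = j ∧ p.1 < i) ∧ (∀ p ∈ Si, p.1 = i ∧ j < p.2) ∧ E = T ∪ Sj ∪ Si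

/-- Ordered containment of a pattern in an n-vertex ordered graph. -/
def OContains {n : ℕ} (G : SimpleGraph (Fin n)) (E : Finset (ℕ × ℕ)) : Prop :=
  ∃ f : ℕ → Fin n, (∀ a ∈ verts E, ∀ b ∈ verts E, a < b → f a < f b) ∧
    ∀ p ∈ E, G.Adj (f p.1) (f p.2)

/-!
Every z-tree arises from a single edge by repeatedly attaching a new extreme leaf, possibly after
mirroring the vertex order: a new last vertex `m` is joined to a vertex `β` that is adjacent to the
current last vertex. If `G` avoids the bigger pattern, delete, for each vertex `x` among the
`n + 1 - |V(E')|` positions that `β` can take in an embedding of the smaller pattern `E'`, the edge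
from `x` to its largest neighbour. The remaining graph avoids `E'`, since an embedding of `E'` could
be extended along that edge; by induction `ex(n, Z) ≤ C(n, 2) - C(n + 1 - k, 2)`.
Conversely, if the longest edge `ij` has `a` vertices before `i`, `c` vertices in `[i, j]` and `b`
after `j`, joining `x < y` unless `a ≤ x`, `x + c ≤ y + 1` and `y + b < n` avoids `Z`, and the
non-edges correspond to the pairs of an `(n + 1 - k)`-set.
-/

open Finset

section Patterns

variable {E T : Finset (ℕ × ℕ)} {i j : ℕ}

lemma mem_verts {a : ℕ} : a ∈ verts E ↔ ∃ p ∈ E, p.1 = a ∨ p.2 = a := by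
  simp only [verts, mem_union, mem_image, ← exists_or, ← and_or_left]

lemma fst_mem_verts {p : ℕ × ℕ} (hp : p ∈ E) : p.1 ∈ verts E :=
  mem_verts.2 ⟨p, hp, .inl rfl⟩

lemma snd_mem_verts {p : ℕ × ℕ} (hp : p ∈ E) : p.2 ∈ verts E :=
  mem_verts.2 ⟨p, hp, .inr rfl⟩

lemma verts_insert (p : ℕ × ℕ) (E : Finset (ℕ × ℕ)) :
    verts (insert p E) = insert p.1 (insert p.2 (verts E)) := by
  ext a
  simp only [verts, image_insert, mem_union, mem_insert]
  tauto

lemma verts_singleton (p : ℕ × ℕ) : verts {p} = {p.1, p.2} := by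
  simp [verts]

/-- Reverses the vertex order of a pattern on `{0, …, N}`; vertices beyond `N` would collapse
to `0`. -/
def mirror (N : ℕ) (E : Finset (ℕ × ℕ)) : Finset (ℕ × ℕ) :=
  E.image fun p => (N - p.2, N - p.1)

lemma verts_mirror (N : ℕ) (E : Finset (ℕ × ℕ)) :
    verts (mirror N E) = (verts E).image (N - ·) := by
  ext v
  simp only [verts, mirror, mem_union, mem_image, ← exists_or, ← and_or_left]
  aesop

section Mirror

variable {N : ℕ} (hN : ∀ v ∈ verts E, v ≤ N)
include hN

lemma card_mirror : #(mirror N E) = #E := by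
  refine card_image_of_injOn fun p hp q hq hpq => ?_
  have := hN _ (fst_mem_verts hp); have := hN _ (snd_mem_verts hp)
  have := hN _ (fst_mem_verts hq); have := hN _ (snd_mem_verts hq)
  simp only [Prod.ext_iff] at hpq ⊢
  omega

lemma card_verts_mirror : #(verts (mirror N E)) = #(verts E) := by
  rw [verts_mirror]
  refine card_image_of_injOn fun a ha b hb hab => ?_
  have := hN a ha; have := hN b hb
  omega

lemma OContains.of_mirror {n : ℕ} {G : SimpleGraph (Fin n)}
    (h : OContains (G.comap Fin.revPerm) (mirror N E)) : OContains G E := by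
  obtain ⟨f, hf, hadj⟩ := h
  have hmem : ∀ a ∈ verts E, N - a ∈ verts (mirror N E) := fun a ha => by
    rw [verts_mirror]; exact mem_image_of_mem _ ha
  refine ⟨fun a => Fin.rev (f (N - a)), fun a ha b hb hab => ?_, fun p hp => ?_⟩
  · have := hN b hb
    exact Fin.rev_lt_rev.2 (hf _ (hmem b hb) _ (hmem a ha) (by omega))
  · simpa using (hadj _ (mem_image_of_mem _ hp)).symm

end Mirror

namespace IncTree

lemma lt (h : IncTree T i j) : i < j := by
  induction h <;> omega

lemma mem (h : IncTree T i j) : (i, j) ∈ T := by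
  cases h <;> simp

lemma le_of_mem_verts (h : IncTree T i j) : ∀ v ∈ verts T, v ≤ j := by
  induction h with
  | single i j hij => simp [verts_singleton]; omega
  | right T i j j' h hj ih =>
    simp only [verts_insert, mem_insert]
    rintro v (rfl | rfl | hv)
    · have := h.lt; omega
    · rfl
    · have := ih v hv; omega
  | left T i j i' h _ ih =>
    simp only [verts_insert, mem_insert]
    rintro v (rfl | rfl | hv)
    · have := h.lt; omega
    · rfl
    · exact ih v hv

lemma mirror {N : ℕ} (h : IncTree T i j) (hj : j ≤ N) :
    IncTree (_root_.mirror N T) (N - j) (N - i) := by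
  induction h with
  | single i j hij =>
    rw [_root_.mirror, image_singleton]
    exact .single _ _ (by omega)
  | right T i j j' _ hj' ih =>
    rw [_root_.mirror, image_insert]
    exact .left _ _ _ _ (ih (by omega)) (by omega)
  | left T i j i' h hi ih =>
    rw [_root_.mirror, image_insert]
    exact .right _ _ _ _ (ih hj) (by have := h.lt; omega)

end IncTree

end Patterns

section ZTrees

variable {E F T Sj Si : Finset (ℕ × ℕ)} {i j β y m : ℕ}

structure TopLeafExt (E F : Finset (ℕ × ℕ)) (β y m : ℕ) : Prop where
  eq_insert : F = insert (β, m) E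
  mem : (β, y) ∈ E
  le_top : ∀ v ∈ verts E, v ≤ y
  top_lt : y < m

namespace TopLeafExt

variable (h : TopLeafExt E F β y m)
include h

lemma notMem_verts : m ∉ verts E := fun hm => by
  have := h.le_top m hm; have := h.top_lt; omega

lemma verts_eq : verts F = insert m (verts E) := by
  rw [h.eq_insert, verts_insert, insert_comm, insert_eq_of_mem (fst_mem_verts h.mem)]

lemma card_eq : #F = #E + 1 := by
  rw [h.eq_insert, card_insert_of_notMem fun hm => h.notMem_verts (snd_mem_verts hm)]

lemma card_verts_eq : #(verts F) = #(verts E) + 1 := by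
  rw [h.verts_eq, card_insert_of_notMem h.notMem_verts]

lemma oContains {n : ℕ} {G : SimpleGraph (Fin n)} {f : ℕ → Fin n}
    (hf : StrictMonoOn f (verts E)) (hadj : ∀ p ∈ E, G.Adj (f p.1) (f p.2)) {w : Fin n}
    (hw : f y < w) (hβw : G.Adj (f β) w) : OContains G F := by
  have hne : ∀ v ∈ verts E, v ≠ m := fun v hv hvm => h.notMem_verts (hvm ▸ hv)
  have hlt : ∀ v ∈ verts E, f v < w := fun v hv =>
    ((hf.le_iff_le hv (snd_mem_verts h.mem)).2 (h.le_top v hv)).trans_lt hw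
  refine ⟨Function.update f m w, ?_, ?_⟩
  · rw [h.verts_eq]
    simp only [mem_insert]
    rintro a (rfl | ha) b (rfl | hb) hab
    · exact absurd hab (lt_irrefl _)
    · have := h.le_top b hb; have := h.top_lt; omega
    · simpa [hne a ha] using hlt a ha
    · simpa [hne a ha, hne b hb] using hf ha hb hab
  · intro p hp
    rw [h.eq_insert] at hp
    rcases mem_insert.1 hp with rfl | hp
    · simpa [hne β (fst_mem_verts h.mem)] using hβw
    · simpa [hne _ (fst_mem_verts hp), hne _ (snd_mem_verts hp)] using hadj p hp

end TopLeafExt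

structure ZDecomp (E T Sj Si : Finset (ℕ × ℕ)) (i j : ℕ) : Prop where
  incTree : IncTree T i j
  left_edges : ∀ p ∈ Sj, p.2 = j ∧ p.1 < i
  right_edges : ∀ p ∈ Si, p.1 = i ∧ j < p.2
  eq_union : E = T ∪ Sj ∪ Si

lemma zTree_iff : ZTree E ↔ ∃ T Sj Si i j, ZDecomp E T Sj Si i j :=
  ⟨fun ⟨_, _, _, _, _, h₁, h₂, h₃, h₄⟩ => ⟨_, _, _, _, _, h₁, h₂, h₃, h₄⟩,
    fun ⟨_, _, _, _, _, h₁, h₂, h₃, h₄⟩ => ⟨_, _, _, _, _, h₁, h₂, h₃, h₄⟩⟩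

namespace ZDecomp

variable (h : ZDecomp E T Sj Si i j)
include h

lemma mem : (i, j) ∈ E := by
  rw [h.eq_union]; exact mem_union_left _ (mem_union_left _ h.incTree.mem)

lemma le_or_mem_right : ∀ v ∈ verts E, v ≤ j ∨ (i, v) ∈ Si := by
  have hij := h.incTree.lt
  intro v hv
  obtain ⟨⟨a, b⟩, hp, hv⟩ := mem_verts.1 hv
  rw [h.eq_union, mem_union, mem_union] at hp
  rcases hp with (hp | hp) | hp
  · have := h.incTree.le_of_mem_verts a (fst_mem_verts hp)
    have := h.incTree.le_of_mem_verts b (snd_mem_verts hp)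
    omega
  · have := h.left_edges _ hp
    simp only at this hv
    omega
  · obtain ⟨rfl, hjb⟩ := h.right_edges _ hp
    simp only at hv
    rcases hv with rfl | rfl
    · omega
    · exact .inr hp

lemma mirror {N : ℕ} (hN : ∀ v ∈ verts E, v ≤ N) :
    ZDecomp (mirror N E) (mirror N T) (mirror N Si) (mirror N Sj) (N - j) (N - i) := by
  have hle : ∀ p ∈ E, p.1 ≤ N ∧ p.2 ≤ N := fun p hp =>
    ⟨hN _ (fst_mem_verts hp), hN _ (snd_mem_verts hp)⟩
  have hij := h.incTree.lt
  have hjN := (hle _ h.mem).2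
  refine ⟨h.incTree.mirror hjN, ?_, ?_, ?_⟩
  · simp only [_root_.mirror, mem_image]
    rintro _ ⟨p, hp, rfl⟩
    have := h.right_edges p hp
    have := hle p (by rw [h.eq_union]; exact mem_union_right _ hp)
    omega
  · simp only [_root_.mirror, mem_image]
    rintro _ ⟨p, hp, rfl⟩
    have := h.left_edges p hp
    omega
  · rw [h.eq_union]
    simp only [_root_.mirror, image_union]
    exact union_right_comm _ _ _

/-- The longest edge `(i, M)` of `Si` is a top leaf: `i` is also adjacent to the next largest
vertex, which is `j` or the far end of another edge of `Si`. -/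
lemma exists_topLeafExt (hSi : Si.Nonempty) :
    ∃ E' y m, ZTree E' ∧ TopLeafExt E' E i y m := by
  set M := (Si.image Prod.snd).max' (hSi.image _)
  have hM : (i, M) ∈ Si := by
    obtain ⟨p, hp, hpM⟩ := mem_image.1 (max'_mem (Si.image Prod.snd) (hSi.image _))
    rwa [show (i, M) = p from Prod.ext (h.right_edges p hp).1.symm hpM.symm]
  have hjM := (h.right_edges _ hM).2
  set Si' := Si.erase (i, M)
  have h' : ZDecomp (T ∪ Sj ∪ Si') T Sj Si' i j :=
    ⟨h.incTree, h.left_edges, fun p hp => h.right_edges p (mem_of_mem_erase hp), rfl⟩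
  set Y := insert j (Si'.image Prod.snd)
  set y := Y.max' (insert_nonempty _ _)
  have hy : y = j ∨ (i, y) ∈ Si' := by
    rcases mem_insert.1 (max'_mem Y (insert_nonempty _ _)) with hy | hy
    · exact .inl hy
    · obtain ⟨p, hp, hpy⟩ := mem_image.1 hy
      exact .inr (by rwa [show (i, y) = p from Prod.ext (h'.right_edges p hp).1.symm hpy.symm])
  refine ⟨T ∪ Sj ∪ Si', y, M, zTree_iff.2 ⟨_, _, _, _, _, h'⟩, ⟨?_, ?_, ?_, ?_⟩⟩
  · rw [h.eq_union, ← union_insert, insert_erase hM]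
  · rcases hy with hy | hy
    · rw [hy]; exact h'.mem
    · exact mem_union_right _ hy
  · intro v hv
    rcases h'.le_or_mem_right v hv with hvj | hv
    · exact hvj.trans (le_max' Y j (mem_insert_self _ _))
    · exact le_max' Y v (mem_insert_of_mem (mem_image_of_mem Prod.snd hv))
  · rcases hy with hy | hy
    · omega
    · have hyM : y ≤ M := le_max' _ _ (mem_image_of_mem Prod.snd (mem_of_mem_erase hy))
      have hyM' : y ≠ M := fun hyM => by simp [Si', hyM] at hy
      omega

end ZDecomp

namespace ZTree

lemma exists_mem_lt (hZ : ZTree E) : ∃ i j, (i, j) ∈ E ∧ i < j := by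
  obtain ⟨T, Sj, Si, i, j, h⟩ := zTree_iff.1 hZ
  exact ⟨i, j, h.mem, h.incTree.lt⟩

/-- An increasing tree with at least two edges is also a z-tree whose newest edge forms `Si` or
`Sj`. -/
lemma exists_zDecomp_nonempty (hZ : ZTree E) (h2 : 2 ≤ #E) :
    ∃ T Sj Si i j, ZDecomp E T Sj Si i j ∧ (Si.Nonempty ∨ Sj.Nonempty) := by
  obtain ⟨T, Sj, Si, i, j, h⟩ := zTree_iff.1 hZ
  by_cases hS : Si.Nonempty ∨ Sj.Nonempty
  · exact ⟨T, Sj, Si, i, j, h, hS⟩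
  simp only [not_or, not_nonempty_iff_eq_empty] at hS
  obtain ⟨hT, -, -, hE⟩ := h
  obtain ⟨rfl, rfl⟩ := hS
  simp only [union_empty] at hE
  subst hE
  cases hT with
  | single => simp at h2
  | right T₀ _ j₀ _ h hj =>
    refine ⟨T₀, ∅, {(i, j)}, i, j₀, ⟨h, by simp, by simpa using hj, ?_⟩,
      .inl (singleton_nonempty _)⟩
    rw [union_empty, union_comm, insert_eq]
  | left T₀ i₀ _ _ h hi =>
    refine ⟨T₀, {(i, j)}, ∅, i₀, j, ⟨h, by simpa using hi, by simp, ?_⟩,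
      .inr (singleton_nonempty _)⟩
    rw [union_empty, union_comm, insert_eq]

lemma exists_topLeafExt (hZ : ZTree E) (h2 : 2 ≤ #E) :
    ∃ E' β y m, ZTree E' ∧ (TopLeafExt E' E β y m ∨
      ∃ N, (∀ v ∈ verts E, v ≤ N) ∧ TopLeafExt E' (mirror N E) β y m) := by
  obtain ⟨T, Sj, Si, i, j, h, hSi | hSj⟩ := hZ.exists_zDecomp_nonempty h2
  · obtain ⟨E', y, m, hE', hext⟩ := h.exists_topLeafExt hSi
    exact ⟨E', i, y, m, hE', .inl hext⟩
  · have hN : ∀ v ∈ verts E, v ≤ (verts E).sup id := fun v hv => le_sup (f := id) hv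
    obtain ⟨E', y, m, hE', hext⟩ := (h.mirror hN).exists_topLeafExt (hSj.image _)
    exact ⟨E', _, y, m, hE', .inr ⟨_, hN, hext⟩⟩

theorem induction_on {P : Finset (ℕ × ℕ) → Prop} (hZ : ZTree E)
    (single : ∀ i j, i < j → P {(i, j)})
    (ext : ∀ E' F β y m, ZTree E' → TopLeafExt E' F β y m → P E' → P F)
    (mirror : ∀ N E, (∀ v ∈ verts E, v ≤ N) → P (mirror N E) → P E) : P E := by
  induction hk : #E using Nat.strong_induction_on generalizing E with
  | _ k ih =>
    obtain ⟨i, j, hij, hlt⟩ := hZ.exists_mem_lt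
    rcases lt_or_ge #E 2 with h1 | h2
    · rw [eq_singleton_iff_unique_mem.2 ⟨hij, fun p hp => card_le_one.1 (by omega) p hp _ hij⟩]
      exact single i j hlt
    · obtain ⟨E', β, y, m, hE', hext | ⟨N, hN, hext⟩⟩ := hZ.exists_topLeafExt h2
      · exact ext _ _ _ _ _ hE' hext (ih _ (by rw [← hk, hext.card_eq]; omega) hE' rfl)
      · refine mirror N E hN (ext _ _ _ _ _ hE' hext (ih _ ?_ hE' rfl))
        rw [← hk, ← card_mirror hN, hext.card_eq]; omega

theorem card_verts (hZ : ZTree E) : #(verts E) = #E + 1 :=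
  induction_on (P := fun E => #(verts E) = #E + 1) hZ
    (fun i j hij => by simp [verts_singleton, hij.ne])
    (fun E' F β y m _ hext ih => by rw [hext.card_verts_eq, hext.card_eq, ih])
    (fun N E hN ih => by rwa [card_verts_mirror hN, card_mirror hN] at ih)

end ZTree

end ZTrees

section Counting

lemma card_filter_lt_add_card_filter_gt_add_card_filter_Icc {α : Type*} [LinearOrder α]
    (S : Finset α) {i j : α} (hij : i ≤ j) :
    #{v ∈ S | v < i} + #{v ∈ S | j < v} + #{v ∈ S | i ≤ v ∧ v ≤ j} = #S := by
  rw [← card_union_of_disjoint, ← card_union_of_disjoint, ← filter_or, ← filter_or,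
    filter_true_of_mem]
  · intro v _
    rcases lt_or_ge v i with hvi | hiv
    · exact .inl (.inl hvi)
    · rcases lt_or_ge j v with hjv | hvj
      exacts [.inl (.inr hjv), .inr ⟨hiv, hvj⟩]
  all_goals
    simp only [disjoint_left, mem_union, mem_filter]
    grind

namespace StrictMonoOn

variable {α : Type*} [LinearOrder α] {S : Finset α} {n : ℕ} {f : α → Fin n}
  (hf : StrictMonoOn f S)
include hf

lemma card_filter_le {p : α → Prop} [DecidablePred p] {t : Finset (Fin n)}
    (hmaps : ∀ v ∈ S, p v → f v ∈ t) : #{v ∈ S | p v} ≤ #t :=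
  card_le_card_of_injOn f (fun v hv => hmaps v (mem_filter.1 hv).1 (mem_filter.1 hv).2)
    (hf.injOn.mono fun _ hv => (mem_filter.1 hv).1)

lemma card_filter_lt_le {β : α} (hβ : β ∈ S) : #{v ∈ S | v < β} ≤ f β := by
  simpa using hf.card_filter_le (t := Iio (f β)) fun v hv hvβ => mem_Iio.2 (hf hv hβ hvβ)

lemma card_filter_gt_le {β : α} (hβ : β ∈ S) : #{v ∈ S | β < v} ≤ n - 1 - f β := by
  simpa using hf.card_filter_le (t := Ioi (f β)) fun v hv hβv => mem_Ioi.2 (hf hβ hv hβv)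

lemma card_filter_Icc_le {i j : α} (hi : i ∈ S) (hj : j ∈ S) :
    #{v ∈ S | i ≤ v ∧ v ≤ j} ≤ f j + 1 - f i := by
  simpa using hf.card_filter_le (t := Icc (f i) (f j)) fun v hv hvij =>
    mem_Icc.2 ⟨(hf.le_iff_le hi hv).2 hvij.1, (hf.le_iff_le hv hj).2 hvij.2⟩

end StrictMonoOn

lemma ncard_edgeSet_eq_card_filter_lt {V : Type*} [LinearOrder V] [Fintype V]
    (G : SimpleGraph V) [DecidableRel G.Adj] :
    G.edgeSet.ncard = #{p : V × V | p.1 < p.2 ∧ G.Adj p.1 p.2} := by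
  rw [← SimpleGraph.coe_edgeFinset, Set.ncard_coe_finset]
  refine (card_bij (fun p _ => s(p.1, p.2)) (fun p hp => by simpa using (mem_filter.1 hp).2.2)
    (fun p hp q hq hpq => ?_) fun e he => ?_).symm
  · simp only [mem_filter, mem_univ, true_and] at hp hq
    rcases Sym2.eq_iff.1 hpq with h | ⟨h₁, h₂⟩
    · exact Prod.ext h.1 h.2
    · exact absurd ((hp.1.trans_eq h₂).trans (hq.1.trans_eq h₁.symm)) (lt_irrefl _)
  · induction e using Sym2.ind with
    | _ u v =>
      rw [SimpleGraph.mem_edgeFinset, SimpleGraph.mem_edgeSet] at he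
      rcases lt_or_gt_of_ne (G.ne_of_adj he) with huv | hvu
      · exact ⟨(u, v), by simp [huv, he], rfl⟩
      · exact ⟨(v, u), by simp [hvu, he.symm], Sym2.eq_swap⟩

lemma card_filter_fst_lt_snd (V : Type*) [LinearOrder V] [Fintype V] :
    #{p : V × V | p.1 < p.2} = (Fintype.card V).choose 2 := by
  have h := ncard_edgeSet_eq_card_filter_lt (⊤ : SimpleGraph V)
  rw [← SimpleGraph.coe_edgeFinset, Set.ncard_coe_finset,
    SimpleGraph.card_edgeFinset_top_eq_card_choose_two] at h
  rw [h]
  congr 1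
  ext p
  simpa using ne_of_lt

lemma ncard_edgeSet_add_card_filter_not_adj {V : Type*} [LinearOrder V] [Fintype V]
    (G : SimpleGraph V) [DecidableRel G.Adj] :
    G.edgeSet.ncard + #{p : V × V | p.1 < p.2 ∧ ¬ G.Adj p.1 p.2} =
      (Fintype.card V).choose 2 := by
  rw [ncard_edgeSet_eq_card_filter_lt, ← card_filter_fst_lt_snd, ← filter_filter,
    ← filter_filter, card_filter_add_card_filter_not]

lemma ncard_edgeSet_comap_equiv {V W : Type*} (e : V ≃ W) (G : SimpleGraph W) :
    (G.comap e).edgeSet.ncard = G.edgeSet.ncard := by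
  rw [← Nat.card_coe_set_eq, ← Nat.card_coe_set_eq]
  exact Nat.card_congr (SimpleGraph.Iso.comap e G).mapEdgeSet

lemma SimpleGraph.exists_edges_to_max_neighbors {V : Type*} [LinearOrder V] [Fintype V]
    (G : SimpleGraph V) (W : Finset V) :
    ∃ D : Finset (Sym2 V), #D ≤ #W ∧
      ∀ x ∈ W, ∀ z, G.Adj x z → ∃ w, z ≤ w ∧ G.Adj x w ∧ s(x, w) ∈ D := by
  classical
  refine ⟨W.image fun x => s(x, (G.neighborFinset x).max.getD x), card_image_le, ?_⟩
  intro x hx z hz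
  rw [← G.mem_neighborFinset] at hz
  obtain ⟨w, hw⟩ := max_of_mem hz
  refine ⟨w, le_max_of_eq hz hw, (G.mem_neighborFinset _ _).1 (mem_of_max hw), ?_⟩
  exact mem_image.2 ⟨x, hx, by rw [hw]; rfl⟩

end Counting

section Bounds

variable {n : ℕ} {E F : Finset (ℕ × ℕ)} {β y m : ℕ}

/-- The `n + 1 - |V(E)|` vertices of `W` are the positions that `β` can take in an embedding of
`E`; deleting the edge from each of them to its largest neighbour destroys every copy of `E` that
could be extended to a copy of `F`. -/
theorem TopLeafExt.ncard_edgeSet_le (hext : TopLeafExt E F β y m) (G : SimpleGraph (Fin n))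
    (hG : ¬ OContains G F) {B : ℕ}
    (hB : ∀ H : SimpleGraph (Fin n), ¬ OContains H E → H.edgeSet.ncard ≤ B) :
    G.edgeSet.ncard ≤ B + (n + 1 - #(verts E)) := by
  have hβ : β ∈ verts E := fst_mem_verts hext.mem
  set a := #{v ∈ verts E | v < β}
  set b := #{v ∈ verts E | β < v}
  have hab : a + b + 1 = #(verts E) := by
    simpa [← le_antisymm_iff, filter_eq, hβ] using
      card_filter_lt_add_card_filter_gt_add_card_filter_Icc (verts E) le_rfl (i := β)
  set W : Finset (Fin n) := {x | a ≤ x ∧ b ≤ n - 1 - x}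
  have hW : #W ≤ n + 1 - #(verts E) :=
    calc #W ≤ #(Ico a (n - b)) := card_le_card_of_injOn Fin.val (fun x hx => by
          simp only [W, coe_filter, mem_univ, true_and, Set.mem_ofPred_eq] at hx
          simp only [coe_Ico, Set.mem_Ico]
          omega) Fin.val_injective.injOn
      _ = n + 1 - #(verts E) := by rw [Nat.card_Ico]; omega
  obtain ⟨D, hDW, hD⟩ := G.exists_edges_to_max_neighbors W
  have hfree : ¬ OContains (G.deleteEdges D) E := by
    rintro ⟨f, hf, hadj⟩
    replace hf : StrictMonoOn f (verts E : Set ℕ) := hf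
    simp only [SimpleGraph.deleteEdges_adj] at hadj
    have hfβ : f β ∈ W := by
      simp only [W, mem_filter, mem_univ, true_and]
      exact ⟨hf.card_filter_lt_le hβ, hf.card_filter_gt_le hβ⟩
    obtain ⟨w, hyw, hβw, hw⟩ := hD _ hfβ _ (hadj _ hext.mem).1
    have hyw' : f y < w := lt_of_le_of_ne hyw fun h => (hadj _ hext.mem).2 (h ▸ hw)
    exact hG (hext.oContains hf (fun p hp => (hadj p hp).1) hyw' hβw)
  calc G.edgeSet.ncard ≤ (G.deleteEdges D).edgeSet.ncard + #D := by
        simpa using Set.ncard_le_ncard_sdiff_add_ncard G.edgeSet D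
    _ ≤ B + (n + 1 - #(verts E)) := add_le_add (hB _ hfree) (hDW.trans hW)

lemma choose_two_succ (m : ℕ) : (m + 1).choose 2 = m.choose 2 + m := by
  simp [Nat.choose_succ_succ', add_comm]

lemma eq_bot_of_not_oContains_singleton {G : SimpleGraph (Fin n)} {i j : ℕ} (hij : i < j)
    (hG : ¬ OContains G {(i, j)}) : G = ⊥ := by
  ext u v
  simp only [SimpleGraph.bot_adj, iff_false]
  intro huv
  wlog h : u < v generalizing u v
  · exact this v u huv.symm (lt_of_le_of_ne (not_lt.1 h) (G.ne_of_adj huv).symm)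
  refine hG ⟨fun x => if x = i then u else v, ?_, by simpa [hij.ne'] using huv⟩
  simp only [verts_singleton, mem_insert, mem_singleton]
  rintro a (rfl | rfl) b (rfl | rfl) hab <;> simp_all [hij.ne']
  all_goals omega

theorem ZTree.ncard_edgeSet_le (hZ : ZTree E) (hn : #E ≤ n) (G : SimpleGraph (Fin n))
    (hG : ¬ OContains G E) : G.edgeSet.ncard ≤ n.choose 2 - (n + 1 - #E).choose 2 := by
  refine ZTree.induction_on (P := fun E => ∀ n, #E ≤ n → ∀ G : SimpleGraph (Fin n),
      ¬ OContains G E → G.edgeSet.ncard ≤ n.choose 2 - (n + 1 - #E).choose 2) hZ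
    (fun i j hij n _ G hG => ?_) (fun E' F β y m hE' hext ih n hn G hG => ?_)
    (fun N E hN ih n hn G hG => ?_) n hn G hG
  · simp [eq_bot_of_not_oContains_singleton hij hG]
  · have hpos : 1 ≤ #E' := card_pos.2 ⟨_, hext.mem⟩
    have hF := hext.card_eq
    have hG' := hext.ncard_edgeSet_le G hG (ih n (by omega))
    have hchoose : (n + 1 - #E').choose 2 = (n + 1 - #F).choose 2 + (n + 1 - #F) := by
      rw [← choose_two_succ]; congr 1; omega
    have hle : (n + 1 - #E').choose 2 ≤ n.choose 2 := Nat.choose_le_choose 2 (by omega)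
    rw [hE'.card_verts] at hG'
    omega
  · have := ih n (by rwa [card_mirror hN]) (G.comap Fin.revPerm) fun h => hG (h.of_mirror hN)
    rwa [card_mirror hN, ncard_edgeSet_comap_equiv] at this

end Bounds

/-- Vertices `x < y` are adjacent unless a pattern with `a` vertices before its edge `ij`, `c`
vertices in `[i, j]` and `b` vertices after `j` fits with `i ↦ x`, `j ↦ y`. -/
def extremalGraph (n a b c : ℕ) : SimpleGraph (Fin n) :=
  SimpleGraph.fromRel fun x y => x < y ∧ ¬ (a ≤ x ∧ x + c ≤ y + 1 ∧ y + b < n)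

instance (n a b c : ℕ) : DecidableRel (extremalGraph n a b c).Adj := fun _ _ =>
  decidable_of_iff _ (SimpleGraph.fromRel_adj ..).symm

section Extremal

variable {n a b c : ℕ}

lemma extremalGraph_adj_of_lt {x y : Fin n} (hxy : x < y) :
    (extremalGraph n a b c).Adj x y ↔ ¬ (a ≤ x ∧ x + c ≤ y + 1 ∧ y + b < n) := by
  simp [extremalGraph, hxy, hxy.ne, hxy.not_gt]

lemma not_oContains_extremalGraph {E : Finset (ℕ × ℕ)} {i j : ℕ} (hij : (i, j) ∈ E)
    (hlt : i < j) :
    ¬ OContains (extremalGraph n #{v ∈ verts E | v < i} #{v ∈ verts E | j < v}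
      #{v ∈ verts E | i ≤ v ∧ v ≤ j}) E := by
  rintro ⟨f, hf, hadj⟩
  replace hf : StrictMonoOn f (verts E : Set ℕ) := hf
  have hi : i ∈ verts E := fst_mem_verts hij
  have hj : j ∈ verts E := snd_mem_verts hij
  have hc := hf.card_filter_Icc_le hi hj
  have hb := hf.card_filter_gt_le hj
  have hfij : f i < f j := hf hi hj hlt
  have := (f j).isLt
  exact (extremalGraph_adj_of_lt hfij).1 (hadj _ hij)
    ⟨hf.card_filter_lt_le hi, by omega, by omega⟩

/-- The non-edges `x < y` are the pairs `(x' + a, y' + a + c - 2)` with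
`x' < y' < n + 2 - (a + b + c)`. -/
lemma card_filter_not_adj_extremalGraph (hc : 2 ≤ c) :
    #{p : Fin n × Fin n | p.1 < p.2 ∧ ¬ (extremalGraph n a b c).Adj p.1 p.2} =
      (n + 2 - (a + b + c)).choose 2 := by
  have hfilter :
      ({p : Fin n × Fin n | p.1 < p.2 ∧ ¬ (extremalGraph n a b c).Adj p.1 p.2} : Finset _) =
        ({p : Fin n × Fin n | a ≤ p.1 ∧ p.1 + c ≤ p.2 + 1 ∧ p.2 + b < n} : Finset _) := by
    refine filter_congr fun p _ => ⟨fun ⟨hlt, hp⟩ => ?_, fun hp => ?_⟩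
    · rwa [extremalGraph_adj_of_lt hlt, not_not] at hp
    · have hlt : p.1 < p.2 := by rw [Fin.lt_def]; omega
      rw [extremalGraph_adj_of_lt hlt, not_not]
      exact ⟨hlt, hp⟩
  rw [hfilter, ← Fintype.card_fin (n + 2 - (a + b + c)), ← card_filter_fst_lt_snd]
  refine (card_bij
    (fun q _ => ((⟨q.1 + a, by omega⟩ : Fin n), ⟨q.2 + (a + c - 2), by omega⟩))
    (fun q hq => ?_) (fun q₁ _ q₂ _ h => ?_) fun p hp => ?_).symm
  · simp only [mem_filter, mem_univ, true_and, Fin.lt_def] at hq ⊢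
    omega
  · simp only [Prod.ext_iff, Fin.ext_iff] at h ⊢
    omega
  · simp only [mem_filter, mem_univ, true_and] at hp
    refine ⟨(⟨p.1 - a, by omega⟩, ⟨p.2 + 2 - (a + c), by omega⟩), ?_, ?_⟩
    · simp only [mem_filter, mem_univ, true_and, Fin.lt_def]
      omega
    · simp only [Prod.ext_iff, Fin.ext_iff]
      omega

lemma ncard_edgeSet_extremalGraph (hc : 2 ≤ c) :
    (extremalGraph n a b c).edgeSet.ncard = n.choose 2 - (n + 2 - (a + b + c)).choose 2 := by
  have h := ncard_edgeSet_add_card_filter_not_adj (extremalGraph n a b c)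
  rw [card_filter_not_adj_extremalGraph hc, Fintype.card_fin] at h
  omega

end Extremal

theorem ZTree.exists_not_oContains {E : Finset (ℕ × ℕ)} (hZ : ZTree E) (n : ℕ) :
    ∃ G : SimpleGraph (Fin n), ¬ OContains G E ∧
      G.edgeSet.ncard = n.choose 2 - (n + 1 - #E).choose 2 := by
  obtain ⟨i, j, hij, hlt⟩ := hZ.exists_mem_lt
  refine ⟨_, not_oContains_extremalGraph hij hlt, ?_⟩
  have hc : 2 ≤ #{v ∈ verts E | i ≤ v ∧ v ≤ j} := by
    have hsub : {i, j} ⊆ {v ∈ verts E | i ≤ v ∧ v ≤ j} := by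
      simp only [insert_subset_iff, singleton_subset_iff, mem_filter]
      exact ⟨⟨fst_mem_verts hij, le_rfl, hlt.le⟩, ⟨snd_mem_verts hij, hlt.le, le_rfl⟩⟩
    simpa [card_pair hlt.ne] using card_le_card hsub
  rw [ncard_edgeSet_extremalGraph hc,
    card_filter_lt_add_card_filter_gt_add_card_filter_Icc _ hlt.le, hZ.card_verts]
  congr 2
  omega

lemma choose_two_sub_choose_two {k n : ℕ} (hk : 1 ≤ k) (hkn : k ≤ n) :
    n.choose 2 - (n + 1 - k).choose 2 = (k - 1) * n - k.choose 2 := by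
  have h₁ : (n + 1 - k).choose 2 ≤ n.choose 2 := Nat.choose_le_choose 2 (by omega)
  have h₂ : k.choose 2 ≤ (k - 1) * n := by
    rw [Nat.choose_two_right, mul_comm]
    exact (Nat.div_le_self _ _).trans (Nat.mul_le_mul_left _ hkn)
  qify [h₁, h₂]
  rw [Nat.cast_choose_two, Nat.cast_choose_two, Nat.cast_choose_two]
  push_cast [Nat.cast_sub (show k ≤ n + 1 by omega), Nat.cast_sub hk]
  ring

/-- For a z-tree Z with k edges and n ≥ k+1, ex→(n,Z) = (k-1)n - C(k,2). -/
theorem stmt_8 (k n : ℕ) (E : Finset (ℕ × ℕ))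
    (hZ : ZTree E) (hk : E.card = k) (hn : k + 1 ≤ n) :
    (∀ G : SimpleGraph (Fin n), ¬ OContains G E →
        G.edgeSet.ncard ≤ (k - 1) * n - k.choose 2) ∧
    (∃ G : SimpleGraph (Fin n), ¬ OContains G E ∧
        G.edgeSet.ncard = (k - 1) * n - k.choose 2) := by
  subst hk
  obtain ⟨i, j, hij, -⟩ := hZ.exists_mem_lt
  have hex := choose_two_sub_choose_two (card_pos.2 ⟨_, hij⟩) (by omega : #E ≤ n)
  refine ⟨fun G hG => hex ▸ hZ.ncard_edgeSet_le (by omega) G hG, ?_⟩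
  obtain ⟨G, hG, hcard⟩ := hZ.exists_not_oContains n
  exact ⟨G, hG, hcard.trans hex⟩
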